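/- Let B ∈ C^{n×n} with B_H ≥ 0 and suppose x₀ ∈ C^n satisfies √B_H B^j x₀ = 0 for all 0 ≤ j ≤ m−1. Then B^m x₀ = B_A^m x₀, where B_A := (B-B*)/2. -/

import Mathlib

open Matrix
open scoped ComplexOrder

/-! Write `B = B_H + B_A`. If `B_H` kills `v = B^j x₀`, then `B^{j+1} x₀ = B_A v`, so induction on `m`
turns every factor `B` into `B_A`. The hypothesis on `√B_H` suffices because
`B_H v = √B_H (√B_H v)`. -/

namespace Matrix

variable {ι R : Type*} [Fintype ι] [DecidableEq ι]

theorem add_pow_mulVec_eq_pow_mulVec [Semiring R] {H K : Matrix ι ι R} {x : ι → R} {m : ℕ}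
    (hH : ∀ j < m, H *ᵥ ((H + K) ^ j *ᵥ x) = 0) : (H + K) ^ m *ᵥ x = K ^ m *ᵥ x := by
  induction m with
  | zero => simp
  | succ m ih =>
    rw [pow_succ', pow_succ', ← mulVec_mulVec, ← mulVec_mulVec, add_mulVec, hH m m.lt_succ_self,
      zero_add, ih fun j hj => hH j (hj.trans m.lt_succ_self)]

namespace PosSemidef

variable {𝕜 : Type*} [RCLike 𝕜] {A : Matrix ι ι 𝕜}

noncomputable def spectralSqrt (hA : A.PosSemidef) : Matrix ι ι 𝕜 :=
  (hA.1.eigenvectorUnitary : Matrix ι ι 𝕜) * diagonal ((↑) ∘ (√·) ∘ hA.1.eigenvalues) *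
    (star hA.1.eigenvectorUnitary : Matrix ι ι 𝕜)

theorem spectralSqrt_mul_self (hA : A.PosSemidef) : hA.spectralSqrt * hA.spectralSqrt = A := by
  set D : Matrix ι ι 𝕜 := diagonal ((↑) ∘ (√·) ∘ hA.1.eigenvalues)
  have hD : D * D = diagonal (RCLike.ofReal ∘ hA.1.eigenvalues) := by
    rw [diagonal_mul_diagonal]
    congr 1 with i
    simp only [Function.comp_apply, ← RCLike.ofReal_mul, Real.mul_self_sqrt (hA.eigenvalues_nonneg i)]
  calc hA.spectralSqrt * hA.spectralSqrt
      = Unitary.conjStarAlgAut 𝕜 _ hA.1.eigenvectorUnitary (D * D) := by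
        simp only [map_mul, Unitary.conjStarAlgAut_apply]; rfl
    _ = A := by rw [hD, ← hA.1.spectral_theorem]

theorem mulVec_eq_zero_of_spectralSqrt_mulVec_eq_zero (hA : A.PosSemidef) {x : ι → 𝕜}
    (hx : hA.spectralSqrt *ᵥ x = 0) : A *ᵥ x = 0 := by
  rw [← hA.spectralSqrt_mul_self, ← mulVec_mulVec, hx, mulVec_zero]

end PosSemidef

end Matrix

/-- If `√B_H B^j x₀ = 0` for all `j < m`, then `B^m x₀ = B_A^m x₀`. -/
theorem pow_mulVec_eq_antiHermitianPart_pow_mulVec {n : ℕ}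
    (B : Matrix (Fin n) (Fin n) ℂ)
    (hBH : ((1/2 : ℂ) • (B + Bᴴ)).PosSemidef) (m : ℕ) (x0 : Fin n → ℂ)
    (hker : ∀ j < m, ((hBH.1.eigenvectorUnitary : Matrix (Fin n) (Fin n) ℂ) *
      diagonal ((↑) ∘ (√·) ∘ hBH.1.eigenvalues) *
      (star hBH.1.eigenvectorUnitary : Matrix (Fin n) (Fin n) ℂ)) *ᵥ (B ^ j *ᵥ x0) = 0) :
    B ^ m *ᵥ x0 = ((1/2 : ℂ) • (B - Bᴴ)) ^ m *ᵥ x0 := by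
  have hB : (1/2 : ℂ) • (B + Bᴴ) + (1/2 : ℂ) • (B - Bᴴ) = B := by module
  conv_lhs => rw [← hB]
  refine add_pow_mulVec_eq_pow_mulVec fun j hj => ?_
  rw [hB]
  exact hBH.mulVec_eq_zero_of_spectralSqrt_mulVec_eq_zero (hker j hj)
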